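/- arXiv:math/0703535 — 4 statements merged into one kernel-verified Lean document; each statement's English description precedes it below -/
import Mathlib

section
/- Suppose h is a positive integer, y ≥ h is a real number, and D is a positive integer that is (1+1/h)-dense in [h, y]. Suppose m = D·m₁⋯m_k where each m_j is a positive integer satisfying m_j ≤ (y/h)·m₁⋯m_{j-1} for 1 ≤ j ≤ k (with the empty product equal to 1 for j = 1). Then m is (1+1/h)-dense in [h, m₁⋯m_k·y]. -/
/-- `n` is `u`-dense in the set `I`: for every `y ∈ I` the interval `(y, u*y]`
contains a divisor of `n`. -/
def DenseDivIn (n : ℕ) (u : ℝ) (I : Set ℝ) : Prop :=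
  ∀ y ∈ I, ∃ d : ℕ, d ∣ n ∧ y < (d : ℝ) ∧ (d : ℝ) ≤ u * y

theorem stmt_1 (h : ℕ) (hh : 0 < h) (y : ℝ) (hy : (h : ℝ) ≤ y)
    (D : ℕ) (hD : 0 < D) (hDdense : DenseDivIn D (1 + 1 / h) (Set.Icc (h : ℝ) y))
    (k : ℕ) (m : Fin k → ℕ) (hmpos : ∀ j, 0 < m j)
    (hm : ∀ j : Fin k, (m j : ℝ) ≤ (y / h) * ∏ i : Fin k, if (i : ℕ) < (j : ℕ) then (m i : ℝ) else 1) :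
    DenseDivIn (D * ∏ i, m i) (1 + 1 / h) (Set.Icc (h : ℝ) ((∏ i, (m i : ℝ)) * y)) := by
  have hhR : (0:ℝ) < h := by exact_mod_cast hh
  set u : ℝ := 1 + 1 / h with hu_def
  set g : ℕ → ℕ := fun i => if hi : i < k then m ⟨i, hi⟩ else 1 with hg
  have hgpos : ∀ i, 0 < g i := by
    intro i; simp only [hg]; split
    · exact hmpos _
    · exact one_pos
  have prodconv : ∀ n, n ≤ k →
      (∏ i : Fin k, if (i : ℕ) < n then (m i : ℝ) else 1)
        = ∏ i ∈ Finset.range n, (g i : ℝ) := by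
    intro n hnk
    have h1 : (∏ i : Fin k, if (i : ℕ) < n then (m i : ℝ) else 1)
        = ∏ i : Fin k, (fun j => if j < n then (g j : ℝ) else 1) (i : ℕ) := by
      apply Finset.prod_congr rfl
      intro i _
      simp only [hg, i.isLt, dif_pos]
    rw [h1, Fin.prod_univ_eq_prod_range (fun j => if j < n then ((g j : ℕ) : ℝ) else 1) k]
    rw [show (∏ x ∈ Finset.range k, if x < n then (g x : ℝ) else 1)
        = ∏ x ∈ Finset.range n, if x < n then (g x : ℝ) else 1 from
      (Finset.prod_subset (Finset.range_subset_range.mpr hnk)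
        (fun x _ hxn => if_neg (by simpa using hxn))).symm]
    exact Finset.prod_congr rfl (fun i hi => if_pos (Finset.mem_range.mp hi))
  have hfull : (∏ i : Fin k, m i) = ∏ i ∈ Finset.range k, g i := by
    rw [show (∏ i : Fin k, m i) = ∏ i : Fin k, g (i : ℕ) from
      Finset.prod_congr rfl (fun i _ => by simp [hg, i.isLt])]
    exact Fin.prod_univ_eq_prod_range g k
  have hfullR : (∏ i : Fin k, (m i : ℝ)) = ∏ i ∈ Finset.range k, (g i : ℝ) := by
    rw [← Nat.cast_prod, hfull, Nat.cast_prod]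
  have key : ∀ n, n ≤ k → DenseDivIn (D * ∏ i ∈ Finset.range n, g i) u
      (Set.Icc (h:ℝ) ((∏ i ∈ Finset.range n, (g i : ℝ)) * y)) := by
    intro n
    induction n with
    | zero => intro _; simpa using hDdense
    | succ n ih =>
      intro hnk
      have ih' := ih (Nat.le_of_succ_le hnk)
      have hPpos : (0:ℝ) < ∏ i ∈ Finset.range n, (g i : ℝ) :=
        Finset.prod_pos (fun i _ => by exact_mod_cast hgpos i)
      set P : ℝ := ∏ i ∈ Finset.range n, (g i : ℝ) with hP
      have hgnR : (0:ℝ) < g n := by exact_mod_cast hgpos n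
      have hgn : (g n : ℝ) ≤ (y / h) * P := by
        have hmn := hm ⟨n, hnk⟩
        rw [show ((⟨n, hnk⟩ : Fin k) : ℕ) = n from rfl] at hmn
        rw [prodconv n (Nat.le_of_succ_le hnk)] at hmn
        have : (m ⟨n, hnk⟩ : ℝ) = (g n : ℝ) := by
          simp only [hg]; rw [dif_pos (show n < k from hnk)]
        rwa [this] at hmn
      intro z hz
      obtain ⟨hz1, hz2⟩ := hz
      rw [Finset.prod_range_succ] at hz2
      have hdvdstep : D * ∏ i ∈ Finset.range n, g i ∣ D * ∏ i ∈ Finset.range (n+1), g i := by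
        rw [Finset.prod_range_succ, ← mul_assoc]
        exact dvd_mul_right _ _
      by_cases hcase : z ≤ P * y
      · obtain ⟨d, hdvd, hd1, hd2⟩ := ih' z ⟨hz1, hcase⟩
        exact ⟨d, hdvd.trans hdvdstep, hd1, hd2⟩
      · push_neg at hcase
        have hhg : (h:ℝ) * g n ≤ P * y := by
          have := mul_le_mul_of_nonneg_left hgn hhR.le
          calc (h:ℝ) * g n ≤ h * ((y/h) * P) := this
            _ = P * y := by field_simp
        have hzn1 : (h:ℝ) ≤ z / g n := by
          rw [le_div_iff₀ hgnR]
          linarith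
        have hzn2 : z / g n ≤ P * y := by
          rw [div_le_iff₀ hgnR]
          nlinarith
        obtain ⟨d, hdvd, hd1, hd2⟩ := ih' (z / g n) ⟨hzn1, hzn2⟩
        refine ⟨d * g n, ?_, ?_, ?_⟩
        · rw [Finset.prod_range_succ, ← mul_assoc]
          exact mul_dvd_mul hdvd dvd_rfl
        · push_cast
          exact (div_lt_iff₀ hgnR).mp hd1
        · push_cast
          have h2 := mul_le_mul_of_nonneg_right hd2 hgnR.le
          calc (d:ℝ) * g n ≤ u * (z / g n) * g n := h2
            _ = u * z := by field_simp
  rw [hfull, hfullR]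
  exact key k le_rfl
end

section
/- Let θ be a real number with the property that for some constant c₁ > 0 and all sufficiently large z, there are at least c₁·z/log z primes p ≤ z such that p−1 has a prime factor greater than p^θ. Then for every c with 0 < c < 2θ − 1, there is a constant c₂ = c₂(c) > 0 such that for all sufficiently large x, there are at least c₂·x integers n ≤ x for which neither φ(n) nor λ(n) is x^c-dense. -/
open scoped Classical

open Filter

/-- The Carmichael function: the exponent of the unit group `(ℤ/nℤ)ˣ`. -/
noncomputable def carmichael (n : ℕ) : ℕ := Monoid.exponent (ZMod n)ˣ

/-- `n` is `u`-dense. -/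
def UDense (n : ℕ) (u : ℝ) : Prop :=
  ∀ y : ℝ, 1 ≤ y → y < (n : ℝ) → ∃ d : ℕ, d ∣ n ∧ y < (d : ℝ) ∧ (d : ℝ) ≤ u * y

lemma carmichael_pos (n : ℕ) (hn : n ≠ 0) : 0 < carmichael n := by
  haveI : NeZero n := ⟨hn⟩
  exact Monoid.ExponentExists.exponent_pos (Monoid.ExponentExists.of_finite)

lemma carmichael_dvd_totient (n : ℕ) (hn : n ≠ 0) : carmichael n ∣ Nat.totient n := by
  haveI : NeZero n := ⟨hn⟩
  rw [← ZMod.card_units_eq_totient]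
  exact Group.exponent_dvd_card

lemma carmichael_mul (m n : ℕ) (h : m.Coprime n) :
    carmichael (m * n) = Nat.lcm (carmichael m) (carmichael n) := by
  unfold carmichael
  rw [Monoid.exponent_eq_of_mulEquiv
    ((Units.mapEquiv (ZMod.chineseRemainder h).toMulEquiv).trans MulEquiv.prodUnits)]
  exact Monoid.exponent_prod

lemma carmichael_prime (p : ℕ) (hp : p.Prime) : carmichael p = p - 1 := by
  haveI : Fact p.Prime := ⟨hp⟩
  unfold carmichael
  rw [IsCyclic.exponent_eq_card, Nat.card_eq_fintype_card, ZMod.card_units_eq_totient,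
    Nat.totient_prime hp]

lemma not_uDense (m q : ℕ) (u : ℝ) (hu : 0 ≤ u) (hm : m ≠ 0) (hq : q.Prime)
    (hdvd : q ∣ m) (h : u * ((m / q : ℕ) : ℝ) < q) : ¬ UDense m u := by
  set T : Finset ℕ := m.divisors.filter (· < q) with hT
  have h1T : 1 ∈ T := by
    simp [hT, Nat.one_mem_divisors, hm, hq.one_lt]
  have hTne : T.Nonempty := ⟨1, h1T⟩
  set D := T.max' hTne with hD
  have hDmem : D ∈ T := T.max'_mem hTne
  have hDdvd : D ∣ m := (Nat.mem_divisors.1 (Finset.mem_filter.1 hDmem).1).1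
  have hDlt : D < q := by simpa using (Finset.mem_filter.1 hDmem).2
  have hDpos : 0 < D := Nat.pos_of_mem_divisors (Finset.mem_filter.1 hDmem).1
  have key : ∀ d : ℕ, d ∣ m → d < q → d ≤ m / q := by
    intro d hd hdq
    have hcop : Nat.Coprime d q := by
      rw [Nat.coprime_comm]
      apply (hq.coprime_iff_not_dvd).mpr
      intro hqd
      exact absurd (Nat.le_of_dvd (Nat.pos_of_mem_divisors (Nat.mem_divisors.2 ⟨hd, hm⟩)) hqd)
        (not_le.2 hdq)
    have : d ∣ m / q := by
      rcases hdvd with ⟨k, hk⟩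
      rw [hk, Nat.mul_div_cancel_left _ hq.pos]
      exact (Nat.Coprime.dvd_of_dvd_mul_left (hcop) (hk ▸ hd))
    exact Nat.le_of_dvd (Nat.div_pos (Nat.le_of_dvd (Nat.pos_of_ne_zero hm) hdvd) hq.pos) this
  intro hud
  have hy1 : (1 : ℝ) ≤ (D : ℝ) := by exact_mod_cast hDpos
  have hym : (D : ℝ) < (m : ℝ) := by
    exact_mod_cast lt_of_lt_of_le hDlt (Nat.le_of_dvd (Nat.pos_of_ne_zero hm) hdvd)
  obtain ⟨d, hd, hd1, hd2⟩ := hud D hy1 hym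
  have hdm : u * (D : ℝ) < q := by
    calc u * (D : ℝ) ≤ u * ((m / q : ℕ) : ℝ) := by
          apply mul_le_mul_of_nonneg_left _ hu
          exact_mod_cast key D hDdvd hDlt
      _ < q := h
  have hdltq : d < q := by exact_mod_cast lt_of_le_of_lt hd2 hdm
  have hdT : d ∈ T := by
    simp only [hT, Finset.mem_filter, Nat.mem_divisors]
    exact ⟨⟨hd, hm⟩, hdltq⟩
  have : d ≤ D := T.le_max' d hdT
  have : (d : ℝ) ≤ (D : ℝ) := by exact_mod_cast this
  linarith

lemma not_dense_aux (x c : ℝ) (hx : 1 < x) (m q N : ℕ) (hq : q.Prime)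
    (hqm : q ∣ m) (hm0 : m ≠ 0) (hmN : m ≤ N) (hNx : (N : ℝ) ≤ x)
    (hq2 : x ^ (1 + c) < (q : ℝ) ^ 2) : ¬ UDense m (x ^ c) := by
  have hx0 : (0:ℝ) < x := by linarith
  have hq0 : (0:ℝ) < q := by exact_mod_cast hq.pos
  apply not_uDense m q _ (Real.rpow_nonneg hx0.le c) hm0 hq hqm
  have h1 : ((m / q : ℕ) : ℝ) ≤ (N : ℝ) / q := by
    calc ((m / q : ℕ) : ℝ) ≤ (m : ℝ) / q := Nat.cast_div_le
      _ ≤ (N : ℝ) / q := by gcongr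

  calc x ^ c * ((m / q : ℕ) : ℝ) ≤ x ^ c * ((N : ℝ) / q) := by
        exact mul_le_mul_of_nonneg_left h1 (Real.rpow_nonneg hx0.le c)
    _ ≤ x ^ c * (x / q) := by gcongr
    _ = x ^ (1 + c) / q := by
        rw [Real.rpow_add hx0, Real.rpow_one]; ring
    _ < (q : ℝ) ^ 2 / q := by gcongr
    _ = q := by rw [sq, mul_div_assoc, div_self hq0.ne', mul_one]

lemma pair_inj {p s p' s' : ℕ} (hp : p.Prime) (hp' : p'.Prime) (hs : 0 < s) (hs' : 0 < s')
    (h1 : s < p) (h2 : s' < p') (he : p * s = p' * s') : p = p' ∧ s = s' := by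
  have hpd : p ∣ p' * s' := he ▸ dvd_mul_right p s
  have hpd' : p' ∣ p * s := he ▸ dvd_mul_right p' s'
  rcases (Nat.Prime.dvd_mul hp).1 hpd with h | h
  · have hpp : p = p' := (Nat.prime_dvd_prime_iff_eq hp hp').1 h
    subst hpp
    exact ⟨rfl, Nat.eq_of_mul_eq_mul_left hp.pos he⟩
  · exfalso
    have hps' : p ≤ s' := Nat.le_of_dvd hs' h
    rcases (Nat.Prime.dvd_mul hp').1 hpd' with h' | h'
    · have : p' = p := (Nat.prime_dvd_prime_iff_eq hp' hp).1 h'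
      omega
    · have : p' ≤ s := Nat.le_of_dvd hs h'
      omega

theorem stmt_6 (θ : ℝ)
    (hθ : ∃ c₁ : ℝ, 0 < c₁ ∧ ∀ᶠ z : ℝ in atTop,
      c₁ * z / Real.log z ≤
        (((Finset.Icc 1 ⌊z⌋₊).filter
          (fun p => p.Prime ∧ ∃ q : ℕ, q.Prime ∧ q ∣ (p - 1) ∧ ((p : ℝ) ^ θ < (q : ℝ)))).card : ℝ))
    (c : ℝ) (hc0 : 0 < c) (hc : c < 2 * θ - 1) :
    ∃ c₂ : ℝ, 0 < c₂ ∧ ∀ᶠ x : ℝ in atTop,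
      c₂ * x ≤ (((Finset.Icc 1 ⌊x⌋₊).filter
        (fun n => ¬ UDense (Nat.totient n) (x ^ c) ∧ ¬ UDense (carmichael n) (x ^ c))).card : ℝ) := by
  obtain ⟨c₁, hc₁, hcount⟩ := hθ
  have hθ0 : 0 < θ := by linarith
  set ε : ℝ := (2 * θ - 1 - c) / (8 * θ) with hεdef
  have hεθ : ε * (8 * θ) = 2 * θ - 1 - c := by
    rw [hεdef, div_mul_cancel₀ _ (by linarith : (0:ℝ) < 8 * θ).ne']
  have hε : 0 < ε := by
    apply div_pos (by linarith) (by linarith)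
  have hε4 : ε < 1 / 4 := by nlinarith
  set α : ℝ := 1 - 2 * ε with hαdef
  have hεα : ε < α := by simp only [hαdef]; linarith
  have hα1 : α < 1 := by simp only [hαdef]; linarith
  have hα0 : 0 < α := by simp only [hαdef]; linarith
  have hexp : 1 + c < 2 * (α * θ) := by
    have : α * θ = θ - 2 * (ε * θ) := by simp only [hαdef]; ring
    nlinarith
  obtain ⟨z₀, hz₀⟩ := eventually_atTop.1 hcount
  refine ⟨c₁ * ε / 2, by positivity, ?_⟩
  have h1 : ∀ᶠ x : ℝ in atTop, (2 : ℝ) ≤ x := eventually_ge_atTop 2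
  have h2 : ∀ᶠ x : ℝ in atTop, max z₀ 3 ≤ x ^ (1 - ε) :=
    (tendsto_rpow_atTop (by linarith)).eventually_ge_atTop _
  have h3 : ∀ᶠ x : ℝ in atTop, 2 / (c₁ * ε) ≤ x ^ ε :=
    (tendsto_rpow_atTop hε).eventually_ge_atTop _
  filter_upwards [h1, h2, h3] with x hx2 hxz hxK
  have hx1 : (1 : ℝ) < x := by linarith
  have hx0 : (0 : ℝ) < x := by linarith
  have hlogx : 0 < Real.log x := Real.log_pos hx1
  set S : ℕ := ⌊x ^ ε⌋₊ with hSdef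
  set P₀ : ℕ := ⌊x ^ α⌋₊ with hP₀def
  have hxε1 : (1 : ℝ) ≤ x ^ ε := Real.one_le_rpow hx1.le hε.le
  have hS1 : 1 ≤ S := Nat.le_floor (by exact_mod_cast hxε1)
  -- the good-prime sets
  set good : ℕ → Prop :=
    fun p => p.Prime ∧ ∃ q : ℕ, q.Prime ∧ q ∣ (p - 1) ∧ ((p : ℝ) ^ θ < (q : ℝ)) with hgood
  set B : ℕ → Finset ℕ :=
    fun s => ((Finset.Icc 1 ⌊x / (s : ℝ)⌋₊).filter good).filter (fun p => P₀ < p) with hBdef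
  set A : Finset ℕ := (Finset.Icc 1 ⌊x⌋₊).filter
    (fun n => ¬ UDense (Nat.totient n) (x ^ c) ∧ ¬ UDense (carmichael n) (x ^ c)) with hAdef
  -- basic facts about members of B s for s ∈ Icc 1 S
  have hBfacts : ∀ s ∈ Finset.Icc 1 S, ∀ p ∈ B s,
      p.Prime ∧ s < p ∧ 0 < s ∧ (p : ℝ) * s ≤ x := by
    intro s hs p hp
    obtain ⟨hs1, hsS⟩ := Finset.mem_Icc.1 hs
    rw [hBdef, Finset.mem_filter, Finset.mem_filter, Finset.mem_Icc] at hp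
    obtain ⟨⟨⟨hp1, hple⟩, hgoodp⟩, hpP₀⟩ := hp
    have hs0 : 0 < s := hs1
    have hsx : (s : ℝ) ≤ x ^ ε := by
      calc (s : ℝ) ≤ (S : ℝ) := by exact_mod_cast hsS
        _ ≤ x ^ ε := Nat.floor_le (by positivity)
    have hpα : x ^ α < p := (Nat.floor_lt (by positivity)).1 hpP₀
    have hsp : s < p := by
      have : (s : ℝ) < (p : ℝ) := by
        calc (s : ℝ) ≤ x ^ ε := hsx
          _ < x ^ α := Real.rpow_lt_rpow_left_iff hx1 |>.mpr hεα
          _ < p := hpα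
      exact_mod_cast this
    have hpsx : (p : ℝ) * s ≤ x := by
      have hpxs : (p : ℝ) ≤ x / s := by
        calc (p : ℝ) ≤ (⌊x / (s : ℝ)⌋₊ : ℝ) := by exact_mod_cast hple
          _ ≤ x / s := Nat.floor_le (by positivity)
      calc (p : ℝ) * s ≤ (x / s) * s := by
            apply mul_le_mul_of_nonneg_right hpxs (by positivity)
        _ = x := by field_simp
    exact ⟨hgoodp.1, hsp, hs0, hpsx⟩
  -- membership in A
  have hmemA : ∀ s ∈ Finset.Icc 1 S, ∀ p ∈ B s, p * s ∈ A := by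
    intro s hs p hp
    obtain ⟨hprime, hsp, hs0, hpsx⟩ := hBfacts s hs p hp
    rw [hBdef, Finset.mem_filter, Finset.mem_filter, Finset.mem_Icc] at hp
    obtain ⟨⟨⟨hp1, hple⟩, hgoodp⟩, hpP₀⟩ := hp
    obtain ⟨q, hq, hqdvd, hqgt⟩ := hgoodp.2
    have hpα : x ^ α < p := (Nat.floor_lt (by positivity)).1 hpP₀
    have hn0 : p * s ≠ 0 := Nat.mul_ne_zero hprime.pos.ne' hs0.ne'
    -- q² > x^(1+c)
    have hq2 : x ^ (1 + c) < (q : ℝ) ^ 2 := by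
      have t1 : x ^ (α * θ) < (p : ℝ) ^ θ := by
        rw [Real.rpow_mul hx0.le]
        exact Real.rpow_lt_rpow (by positivity) hpα hθ0
      have t2 : x ^ (α * θ) < (q : ℝ) := t1.trans hqgt
      have t3 : (x ^ (α * θ)) ^ 2 < (q : ℝ) ^ 2 :=
        pow_lt_pow_left₀ t2 (by positivity) (by norm_num)
      have t5 : x ^ (2 * (α * θ)) = (x ^ (α * θ)) ^ 2 := by
        rw [two_mul, Real.rpow_add hx0, sq]
      have t4 : x ^ (1 + c) < x ^ (2 * (α * θ)) :=
        Real.rpow_lt_rpow_left_iff hx1 |>.mpr hexp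
      rw [t5] at t4
      linarith
    -- p and s coprime
    have hcop : Nat.Coprime p s := by
      apply (Nat.Prime.coprime_iff_not_dvd hprime).2
      intro hdvd
      exact absurd (Nat.le_of_dvd hs0 hdvd) (not_le.2 hsp)
    have htot : Nat.totient (p * s) = (p - 1) * Nat.totient s := by
      rw [Nat.totient_mul hcop, Nat.totient_prime hprime]
    have hqtot : q ∣ Nat.totient (p * s) := by
      rw [htot]; exact Dvd.dvd.mul_right hqdvd _
    have hqcar : q ∣ carmichael (p * s) := by
      refine dvd_trans hqdvd ?_
      rw [carmichael_mul p s hcop, carmichael_prime p hprime]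
      exact Nat.dvd_lcm_left _ _
    have htot0 : Nat.totient (p * s) ≠ 0 := (Nat.totient_pos.2 (Nat.pos_of_ne_zero hn0)).ne'
    have hcar0 : carmichael (p * s) ≠ 0 := (carmichael_pos _ hn0).ne'
    have hcartot : carmichael (p * s) ≤ Nat.totient (p * s) :=
      Nat.le_of_dvd (Nat.pos_of_ne_zero htot0) (carmichael_dvd_totient _ hn0)
    have htotle : Nat.totient (p * s) ≤ p * s := Nat.totient_le _
    have hpsx' : ((p * s : ℕ) : ℝ) ≤ x := by push_cast; exact hpsx
    rw [hAdef, Finset.mem_filter, Finset.mem_Icc]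
    refine ⟨⟨Nat.one_le_iff_ne_zero.2 hn0, Nat.le_floor hpsx'⟩, ?_, ?_⟩
    · exact not_dense_aux x c hx1 _ q (p * s) hq hqtot htot0 htotle hpsx' hq2
    · exact not_dense_aux x c hx1 _ q (p * s) hq hqcar hcar0
        (le_trans hcartot htotle) hpsx' hq2
  -- counting
  set T : Finset ℕ := (Finset.Icc 1 S).biUnion (fun s => (B s).image (· * s)) with hTdef
  have hTsub : T ⊆ A := by
    intro n hn
    rw [hTdef, Finset.mem_biUnion] at hn
    obtain ⟨s, hs, hn⟩ := hn
    obtain ⟨p, hp, rfl⟩ := Finset.mem_image.1 hn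
    exact hmemA s hs p hp
  have hdisj : ∀ s ∈ Finset.Icc 1 S, ∀ t ∈ Finset.Icc 1 S, s ≠ t →
      Disjoint ((B s).image (· * s)) ((B t).image (· * t)) := by
    intro s hs t ht hst
    rw [Finset.disjoint_left]
    intro a ha ha'
    obtain ⟨p, hp, rfl⟩ := Finset.mem_image.1 ha
    obtain ⟨p', hp', he⟩ := Finset.mem_image.1 ha'
    obtain ⟨hprime, hsp, hs0, -⟩ := hBfacts s hs p hp
    obtain ⟨hprime', hsp', hs0', -⟩ := hBfacts t ht p' hp'
    exact hst ((pair_inj hprime' hprime hs0' hs0 hsp' hsp he).2).symm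
  have hcardT : T.card = ∑ s ∈ Finset.Icc 1 S, (B s).card := by
    rw [hTdef, Finset.card_biUnion hdisj]
    refine Finset.sum_congr rfl (fun s hs => ?_)
    apply Finset.card_image_of_injective
    intro a b hab
    have hs0 : 0 < s := (Finset.mem_Icc.1 hs).1
    exact Nat.eq_of_mul_eq_mul_right hs0 hab
  -- lower bound for each B s
  have hBlow : ∀ s ∈ Finset.Icc 1 S,
      c₁ * x / (s * Real.log x) - x ^ α ≤ ((B s).card : ℝ) := by
    intro s hs
    obtain ⟨hs1, hsS⟩ := Finset.mem_Icc.1 hs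
    have hs0 : (0 : ℝ) < s := by exact_mod_cast hs1
    have hsx : (s : ℝ) ≤ x ^ ε := by
      calc (s : ℝ) ≤ (S : ℝ) := by exact_mod_cast hsS
        _ ≤ x ^ ε := Nat.floor_le (by positivity)
    set z : ℝ := x / s with hzdef
    have hz0 : 0 < z := by positivity
    have hzge : x ^ (1 - ε) ≤ z := by
      rw [hzdef]
      rw [Real.rpow_sub hx0, Real.rpow_one]
      apply div_le_div_of_nonneg_left hx0.le (by positivity) hsx
    have hz3 : (3 : ℝ) ≤ z := le_trans (le_trans (le_max_right z₀ 3) hxz) hzge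
    have hzz₀ : z₀ ≤ z := le_trans (le_trans (le_max_left z₀ 3) hxz) hzge
    have hG := hz₀ z hzz₀
    have hlogz : 0 < Real.log z := Real.log_pos (by linarith)
    have hzx : z ≤ x := by
      rw [hzdef]
      calc x / (s:ℝ) ≤ x / 1 := by
            apply div_le_div_of_nonneg_left hx0.le (by norm_num) (by exact_mod_cast hs1)
        _ = x := div_one x
    have hlogle : Real.log z ≤ Real.log x := Real.log_le_log hz0 hzx
    have hmain : c₁ * x / (s * Real.log x) ≤ c₁ * z / Real.log z := by
      rw [hzdef]
      rw [div_le_div_iff₀ (by positivity) hlogz]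
      have e1 : c₁ * (x / s) * (s * Real.log x) = (c₁ * x) * Real.log x := by
        field_simp
      calc c₁ * x * Real.log z ≤ c₁ * x * Real.log x := by
            apply mul_le_mul_of_nonneg_left hlogle (by positivity)
        _ = c₁ * (x / s) * (s * Real.log x) := by field_simp
    -- card of B s vs card of G z minus P₀
    have hsplit : (((Finset.Icc 1 ⌊z⌋₊).filter good).card : ℝ) - P₀ ≤ ((B s).card : ℝ) := by
      have hnegsub : ((Finset.Icc 1 ⌊z⌋₊).filter good).filter (fun p => ¬ P₀ < p)
          ⊆ Finset.Icc 1 P₀ := by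
        intro p hp
        rw [Finset.mem_filter, Finset.mem_filter, Finset.mem_Icc] at hp
        rw [Finset.mem_Icc]
        exact ⟨hp.1.1.1, not_lt.1 hp.2⟩
      have hnegcard : (((Finset.Icc 1 ⌊z⌋₊).filter good).filter (fun p => ¬ P₀ < p)).card ≤ P₀ := by
        calc _ ≤ (Finset.Icc 1 P₀).card := Finset.card_le_card hnegsub
          _ = P₀ := by rw [Nat.card_Icc]; omega
      have hsum := Finset.card_filter_add_card_filter_not
        (s := (Finset.Icc 1 ⌊z⌋₊).filter good) (p := fun p => P₀ < p)
      have : ((B s).card : ℕ) + (((Finset.Icc 1 ⌊z⌋₊).filter good).filter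
          (fun p => ¬ P₀ < p)).card = ((Finset.Icc 1 ⌊z⌋₊).filter good).card := by
        rw [hBdef]
        exact hsum
      have h2 : (((Finset.Icc 1 ⌊z⌋₊).filter good).card : ℝ)
          = ((B s).card : ℝ) + ((((Finset.Icc 1 ⌊z⌋₊).filter good).filter
            (fun p => ¬ P₀ < p)).card : ℝ) := by exact_mod_cast this.symm
      have h3 : ((((Finset.Icc 1 ⌊z⌋₊).filter good).filter
          (fun p => ¬ P₀ < p)).card : ℝ) ≤ (P₀ : ℝ) := by exact_mod_cast hnegcard
      linarith
    have hP₀le : (P₀ : ℝ) ≤ x ^ α := Nat.floor_le (by positivity)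
    have hGge : c₁ * z / Real.log z ≤ (((Finset.Icc 1 ⌊z⌋₊).filter good).card : ℝ) := hG
    linarith
  -- sum the lower bounds
  have hsumlow : ∑ s ∈ Finset.Icc 1 S, (c₁ * x / (s * Real.log x) - x ^ α)
      ≤ ((T.card : ℕ) : ℝ) := by
    rw [hcardT]
    push_cast
    exact Finset.sum_le_sum hBlow
  -- harmonic sum bound
  have hharm : ε * Real.log x ≤ ∑ s ∈ Finset.Icc 1 S, (s : ℝ)⁻¹ := by
    have := log_le_harmonic_floor (x ^ ε) (by positivity)
    rw [Real.log_rpow hx0] at this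
    rw [hSdef]
    calc ε * Real.log x ≤ ((harmonic ⌊x ^ ε⌋₊ : ℚ) : ℝ) := this
      _ = ∑ s ∈ Finset.Icc 1 ⌊x ^ ε⌋₊, (s : ℝ)⁻¹ := by
          rw [harmonic_eq_sum_Icc]; push_cast; rfl
  have hmainsum : c₁ * ε * x ≤ ∑ s ∈ Finset.Icc 1 S, c₁ * x / (s * Real.log x) := by
    have e : ∀ s ∈ Finset.Icc 1 S, c₁ * x / (s * Real.log x)
        = (c₁ * x / Real.log x) * (s : ℝ)⁻¹ := by
      intro s hs
      have hs0 : (0 : ℝ) < s := by exact_mod_cast (Finset.mem_Icc.1 hs).1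
      field_simp
    rw [Finset.sum_congr rfl e, ← Finset.mul_sum]
    calc c₁ * ε * x = (c₁ * x / Real.log x) * (ε * Real.log x) := by
          field_simp
      _ ≤ (c₁ * x / Real.log x) * ∑ s ∈ Finset.Icc 1 S, (s : ℝ)⁻¹ := by
          apply mul_le_mul_of_nonneg_left hharm (by positivity)
  -- error term
  have herr : ∑ s ∈ Finset.Icc 1 S, (x ^ α : ℝ) ≤ c₁ * ε / 2 * x := by
    rw [Finset.sum_const, Nat.card_Icc, Nat.add_sub_cancel]
    have hSle : (S : ℝ) ≤ x ^ ε := Nat.floor_le (by positivity)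
    have h1x : (S : ℝ) * (x ^ α) ≤ x ^ ε * x ^ α := by
      apply mul_le_mul_of_nonneg_right hSle (by positivity)
    have h2x : x ^ ε * x ^ α = x ^ (1 - ε) := by
      rw [← Real.rpow_add hx0]
      congr 1
      simp only [hαdef]; ring
    have h3x : x ^ (1 - ε) ≤ c₁ * ε / 2 * x := by
      have hKx : 2 / (c₁ * ε) ≤ x ^ ε := hxK
      have hx' : x ^ (1 - ε) * x ^ ε = x := by
        rw [← Real.rpow_add hx0]; simp
      have hcε : 0 < c₁ * ε := by positivity
      have : x ^ (1 - ε) * (2 / (c₁ * ε)) ≤ x ^ (1 - ε) * x ^ ε := by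
        apply mul_le_mul_of_nonneg_left hKx (by positivity)
      rw [hx'] at this
      rw [mul_comm, div_mul_eq_mul_div, div_le_iff₀ hcε] at this
      linarith
    rw [nsmul_eq_mul]
    calc ((S:ℝ)) * (x ^ α) ≤ x ^ ε * x ^ α := h1x
      _ = x ^ (1 - ε) := h2x
      _ ≤ c₁ * ε / 2 * x := h3x
  -- put it all together
  have hTA : (T.card : ℝ) ≤ (A.card : ℝ) := by exact_mod_cast Finset.card_le_card hTsub
  have hfinal : c₁ * ε / 2 * x ≤ (T.card : ℝ) := by
    have hsplit2 : ∑ s ∈ Finset.Icc 1 S, (c₁ * x / (s * Real.log x) - x ^ α)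
        = (∑ s ∈ Finset.Icc 1 S, c₁ * x / (s * Real.log x))
          - ∑ s ∈ Finset.Icc 1 S, (x ^ α : ℝ) := by
      rw [Finset.sum_sub_distrib]
    have := hsumlow
    rw [hsplit2] at this
    have : c₁ * ε * x - c₁ * ε / 2 * x ≤ (T.card : ℝ) := by linarith
    linarith
  rw [hAdef] at hTA
  linarith
end

section
/- There exists an absolute constant K such that for all x ≥ 1 and 0 < ε ≤ 1, the number of n ≤ x with φ(n) ≤ ε·n is at most K·ε·x. -/
open Finset

lemma prodIcc (M : ℕ) (hM : 1 ≤ M) :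
    ∏ k ∈ Icc 2 M, (1 - ((k:ℝ)⁻¹)^2) = ((M:ℝ)+1)/(2*M) := by
  induction M with
  | zero => omega
  | succ m ih =>
    rcases Nat.eq_or_lt_of_le hM with h | h
    · simp [← h]
    · have hm : 1 ≤ m := by omega
      rw [← Finset.insert_Icc_right_eq_Icc_add_one (by omega), Finset.prod_insert (by simp), ih hm]
      have h2 : (0:ℝ) < (m:ℝ) := by exact_mod_cast hm
      have h2' : (m:ℝ) ≠ 0 := ne_of_gt h2
      have h1 : ((m:ℝ)+1) ≠ 0 := by positivity
      push_cast
      field_simp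
      ring

lemma prodPrimes (S : Finset ℕ) (hS : ∀ p ∈ S, Nat.Prime p) :
    (1:ℝ)/2 ≤ ∏ p ∈ S, (1 - ((p:ℝ)⁻¹)^2) := by
  set M := max 1 (S.sup id) with hMdef
  have hsub : S ⊆ Icc 2 M := by
    intro p hp
    simp only [mem_Icc]
    exact ⟨(hS p hp).two_le, le_max_of_le_right (Finset.le_sup (f := id) hp)⟩
  have hfac : ∀ k ∈ Icc 2 M, 0 ≤ 1 - ((k:ℝ)⁻¹)^2 ∧ 1 - ((k:ℝ)⁻¹)^2 ≤ 1 := by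
    intro k hk
    have hk2 : (2:ℕ) ≤ k := (mem_Icc.mp hk).1
    have : ((k:ℝ)⁻¹)^2 ≤ 1 := by
      have hk1 : (1:ℝ) ≤ (k:ℝ) := by exact_mod_cast le_trans (by norm_num) hk2
      have : (k:ℝ)⁻¹ ≤ 1 := by
        rw [inv_le_one_iff₀]; right; exact hk1
      nlinarith [inv_nonneg.mpr (le_trans zero_le_one hk1)]
    constructor
    · linarith
    · nlinarith [sq_nonneg ((k:ℝ)⁻¹)]
  have h1 : ∏ k ∈ Icc 2 M, (1 - ((k:ℝ)⁻¹)^2) ≤ ∏ p ∈ S, (1 - ((p:ℝ)⁻¹)^2) := by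
    rw [← Finset.prod_sdiff hsub]
    have hP : 0 ≤ ∏ p ∈ S, (1 - ((p:ℝ)⁻¹)^2) :=
      Finset.prod_nonneg fun p hp => (hfac p (hsub hp)).1
    have hD : ∏ k ∈ Icc 2 M \ S, (1 - ((k:ℝ)⁻¹)^2) ≤ 1 :=
      Finset.prod_le_one (fun k hk => (hfac k (mem_sdiff.mp hk).1).1)
        (fun k hk => (hfac k (mem_sdiff.mp hk).1).2)
    nlinarith
  refine le_trans ?_ h1
  rw [prodIcc M (le_max_left _ _)]
  have hM1 : (1:ℝ) ≤ (M:ℝ) := by exact_mod_cast le_max_left 1 (S.sup id)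
  rw [div_le_div_iff₀ (by norm_num) (by linarith)]
  linarith

lemma prodOnePlus (n : ℕ) (hn : n ≠ 0) :
    ∏ p ∈ n.primeFactors, (1 + (p:ℝ)⁻¹) ≤ ∑ d ∈ n.divisors, (d:ℝ)⁻¹ := by
  have h1 : ∏ p ∈ n.primeFactors, (1 + (p:ℝ)⁻¹)
      = ∑ t ∈ n.primeFactors.powerset, ((∏ p ∈ t, p : ℕ):ℝ)⁻¹ := by
    have := Finset.prod_add (fun p : ℕ => (p:ℝ)⁻¹) (fun _ => (1:ℝ)) n.primeFactors
    simp only [add_comm] at this ⊢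
    rw [this]
    refine Finset.sum_congr rfl fun t ht => ?_
    push_cast
    simp
  rw [h1]
  have hinj : Set.InjOn (fun t : Finset ℕ => ∏ p ∈ t, p) n.primeFactors.powerset := by
    intro t ht u hu h
    simp only [Finset.coe_powerset, Set.mem_preimage, Set.mem_powerset_iff] at ht hu
    have hT : ∀ p ∈ t, Nat.Prime p := fun p hp =>
      Nat.prime_of_mem_primeFactors (ht hp)
    have hU : ∀ p ∈ u, Nat.Prime p := fun p hp =>
      Nat.prime_of_mem_primeFactors (hu hp)
    have := congrArg Nat.primeFactors h
    rwa [Nat.primeFactors_prod hT, Nat.primeFactors_prod hU] at this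
  have h2 : ∑ t ∈ n.primeFactors.powerset, ((∏ p ∈ t, p : ℕ):ℝ)⁻¹
      = ∑ d ∈ Finset.image (fun t : Finset ℕ => ∏ p ∈ t, p) n.primeFactors.powerset, (d:ℝ)⁻¹ :=
    (Finset.sum_image (f := fun d : ℕ => ((d:ℝ))⁻¹) (g := fun t : Finset ℕ => ∏ p ∈ t, p) fun t ht u hu h => hinj ht hu h).symm
  rw [h2]
  refine Finset.sum_le_sum_of_subset_of_nonneg ?_ (fun d _ _ => by positivity)
  intro d hd
  simp only [Finset.mem_image] at hd
  obtain ⟨t, ht, rfl⟩ := hd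
  rw [Finset.mem_powerset] at ht
  rw [Nat.mem_divisors]
  exact ⟨dvd_trans (Finset.prod_dvd_prod_of_subset _ _ _ ht) (Nat.prod_primeFactors_dvd n), hn⟩

lemma keyIneq (n : ℕ) (hn : 1 ≤ n) :
    (n:ℝ) ≤ 2 * (Nat.totient n) * ∑ d ∈ n.divisors, (d:ℝ)⁻¹ := by
  have hφ : (Nat.totient n : ℝ) = n * ∏ p ∈ n.primeFactors, (1 - (p:ℝ)⁻¹) := by
    have h := congrArg (fun q : ℚ => (q:ℝ)) (Nat.totient_eq_mul_prod_factors n)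
    push_cast at h
    exact h
  have hP : ∀ p ∈ n.primeFactors, Nat.Prime p := fun p hp => Nat.prime_of_mem_primeFactors hp
  have h2 := prodPrimes n.primeFactors hP
  have hprod : ∏ p ∈ n.primeFactors, (1 - ((p:ℝ)⁻¹)^2)
      = (∏ p ∈ n.primeFactors, (1 - (p:ℝ)⁻¹)) * ∏ p ∈ n.primeFactors, (1 + (p:ℝ)⁻¹) := by
    rw [← Finset.prod_mul_distrib]
    exact Finset.prod_congr rfl fun p _ => by ring
  have h3 := prodOnePlus n (by omega)
  have hn' : (0:ℝ) < n := by exact_mod_cast hn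
  have hplus : (0:ℝ) ≤ ∏ p ∈ n.primeFactors, (1 + (p:ℝ)⁻¹) :=
    Finset.prod_nonneg fun p _ => by positivity
  have hφn : (0:ℝ) ≤ (Nat.totient n : ℝ) := by positivity
  calc (n:ℝ) = 2 * (n * ((1:ℝ)/2)) := by ring
    _ ≤ 2 * (n * ∏ p ∈ n.primeFactors, (1 - ((p:ℝ)⁻¹)^2)) := by nlinarith
    _ = 2 * (Nat.totient n) * ∏ p ∈ n.primeFactors, (1 + (p:ℝ)⁻¹) := by
        rw [hφ, hprod]; ring
    _ ≤ 2 * (Nat.totient n) * ∑ d ∈ n.divisors, (d:ℝ)⁻¹ := by nlinarith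

lemma sumInvSq (N : ℕ) (h : 1 ≤ N) : ∑ d ∈ Icc 1 N, ((d:ℝ)⁻¹)^2 ≤ 2 - (N:ℝ)⁻¹ := by
  induction N with
  | zero => omega
  | succ m ih =>
    rcases Nat.eq_or_lt_of_le h with h1 | h1
    · simp [← h1]; norm_num
    · have hm : 1 ≤ m := by omega
      rw [← Finset.insert_Icc_right_eq_Icc_add_one (by omega), Finset.sum_insert (by simp)]
      have hmr : (1:ℝ) ≤ (m:ℝ) := by exact_mod_cast hm
      have key : (((m:ℝ)+1)⁻¹)^2 + (2 - (m:ℝ)⁻¹) ≤ 2 - ((m:ℝ)+1)⁻¹ := by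
        have h0 : (0:ℝ) < m := by linarith
        have h2 : (0:ℝ) < (m:ℝ)+1 := by linarith
        have e1 : (((m:ℝ)+1)⁻¹)^2 ≤ (m:ℝ)⁻¹ - ((m:ℝ)+1)⁻¹ := by
          rw [inv_sub_inv (by positivity) (by positivity)]
          rw [inv_pow, inv_le_iff_one_le_mul₀ (by positivity), div_mul_eq_mul_div,
            le_div_iff₀ (by positivity)] at *
          nlinarith
        linarith
      have := ih hm
      push_cast
      linarith

lemma sumDiv (N : ℕ) : ∑ n ∈ Icc 1 N, ∑ d ∈ n.divisors, (d:ℝ)⁻¹ ≤ 2*N := by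
  rcases Nat.eq_zero_or_pos N with rfl | hN
  · simp
  have hdiv : ∀ n ∈ Icc 1 N, n.divisors = (Icc 1 N).filter (· ∣ n) := by
    intro n hn
    rw [mem_Icc] at hn
    ext d
    simp only [Nat.mem_divisors, Finset.mem_filter, mem_Icc]
    constructor
    · rintro ⟨hd, -⟩
      exact ⟨⟨Nat.pos_of_dvd_of_pos hd (by omega), le_trans (Nat.le_of_dvd (by omega) hd) hn.2⟩, hd⟩
    · rintro ⟨-, hd⟩
      exact ⟨hd, by omega⟩
  calc ∑ n ∈ Icc 1 N, ∑ d ∈ n.divisors, (d:ℝ)⁻¹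
      = ∑ n ∈ Icc 1 N, ∑ d ∈ (Icc 1 N).filter (· ∣ n), (d:ℝ)⁻¹ := by
        exact Finset.sum_congr rfl fun n hn => by rw [hdiv n hn]
    _ = ∑ n ∈ Icc 1 N, ∑ d ∈ Icc 1 N, if d ∣ n then (d:ℝ)⁻¹ else 0 := by
        exact Finset.sum_congr rfl fun n _ => (Finset.sum_filter _ _)
    _ = ∑ d ∈ Icc 1 N, ∑ n ∈ Icc 1 N, if d ∣ n then (d:ℝ)⁻¹ else 0 := Finset.sum_comm
    _ = ∑ d ∈ Icc 1 N, ((N / d : ℕ) : ℝ) * (d:ℝ)⁻¹ := by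
        refine Finset.sum_congr rfl fun d _ => ?_
        rw [← Finset.sum_filter, Finset.sum_const, nsmul_eq_mul]
        congr 1
        have : Icc 1 N = Ioc 0 N := by rw [← Finset.Icc_add_one_left_eq_Ioc, zero_add]
        rw [this]
        exact_mod_cast congrArg (Nat.cast (R := ℝ)) (Nat.Ioc_filter_dvd_card_eq_div N d)
    _ ≤ ∑ d ∈ Icc 1 N, (N:ℝ) * ((d:ℝ)⁻¹)^2 := by
        refine Finset.sum_le_sum fun d hd => ?_
        have hd1 : 1 ≤ d := (mem_Icc.mp hd).1
        have hdr : (0:ℝ) < d := by exact_mod_cast hd1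
        have h1 : ((N / d : ℕ) : ℝ) ≤ (N:ℝ) / d := Nat.cast_div_le
        calc ((N / d : ℕ) : ℝ) * (d:ℝ)⁻¹ ≤ ((N:ℝ)/d) * (d:ℝ)⁻¹ := by
              apply mul_le_mul_of_nonneg_right h1 (by positivity)
          _ = (N:ℝ) * ((d:ℝ)⁻¹)^2 := by
              rw [pow_two, div_mul_eq_mul_div, div_eq_mul_inv]; ring
    _ = (N:ℝ) * ∑ d ∈ Icc 1 N, ((d:ℝ)⁻¹)^2 := by rw [Finset.mul_sum]
    _ ≤ (N:ℝ) * (2 - (N:ℝ)⁻¹) := by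
        have hNr : (0:ℝ) ≤ (N:ℝ) := by positivity
        exact mul_le_mul_of_nonneg_left (sumInvSq N hN) hNr
    _ ≤ 2*N := by
        have hNr : (0:ℝ) < (N:ℝ) := by exact_mod_cast hN
        have : (0:ℝ) ≤ (N:ℝ)⁻¹ := by positivity
        nlinarith

theorem stmt_15 : ∃ K : ℝ, 0 < K ∧ ∀ x : ℝ, 1 ≤ x → ∀ ε : ℝ, 0 < ε → ε ≤ 1 →
    (((Finset.Icc 1 ⌊x⌋₊).filter
      (fun n => (Nat.totient n : ℝ) ≤ ε * n)).card : ℝ) ≤ K * ε * x := by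
  refine ⟨4, by norm_num, fun x hx ε hε hε1 => ?_⟩
  set N := ⌊x⌋₊ with hNdef
  have hNx : (N:ℝ) ≤ x := Nat.floor_le (by linarith)
  have hxpos : (0:ℝ) ≤ x := by linarith
  set F := (Finset.Icc 1 N).filter (fun n => (Nat.totient n : ℝ) ≤ ε * n) with hF
  have hterm : ∀ n ∈ F, (1:ℝ) ≤ 2 * ε * ∑ d ∈ n.divisors, (d:ℝ)⁻¹ := by
    intro n hn
    rw [hF, Finset.mem_filter, mem_Icc] at hn
    obtain ⟨⟨hn1, -⟩, hφ⟩ := hn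
    have hnr : (0:ℝ) < n := by exact_mod_cast hn1
    have hS : (0:ℝ) ≤ ∑ d ∈ n.divisors, (d:ℝ)⁻¹ :=
      Finset.sum_nonneg fun d _ => by positivity
    have hkey := keyIneq n hn1
    have : (n:ℝ) ≤ 2 * (ε * n) * ∑ d ∈ n.divisors, (d:ℝ)⁻¹ := by nlinarith
    rw [show 2 * (ε * (n:ℝ)) * ∑ d ∈ n.divisors, (d:ℝ)⁻¹
        = (n:ℝ) * (2 * ε * ∑ d ∈ n.divisors, (d:ℝ)⁻¹) from by ring] at this
    exact le_of_mul_le_mul_left (by linarith [this]) hnr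
  calc (F.card : ℝ) = ∑ n ∈ F, (1:ℝ) := by simp
    _ ≤ ∑ n ∈ F, 2 * ε * ∑ d ∈ n.divisors, (d:ℝ)⁻¹ := Finset.sum_le_sum hterm
    _ ≤ ∑ n ∈ Icc 1 N, 2 * ε * ∑ d ∈ n.divisors, (d:ℝ)⁻¹ := by
        refine Finset.sum_le_sum_of_subset_of_nonneg (Finset.filter_subset _ _) ?_
        intro n _ _
        have : (0:ℝ) ≤ ∑ d ∈ n.divisors, (d:ℝ)⁻¹ :=
          Finset.sum_nonneg fun d _ => by positivity
        positivity
    _ = 2 * ε * ∑ n ∈ Icc 1 N, ∑ d ∈ n.divisors, (d:ℝ)⁻¹ := by rw [← Finset.mul_sum]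
    _ ≤ 2 * ε * (2 * N) := by
        have := sumDiv N
        nlinarith
    _ ≤ 4 * ε * x := by nlinarith
end

section
/- For every real f with 0 < f ≤ 1/2, there is a constant c(f) > 0 such that for all sufficiently large x, at least c(f)·x integers n ≤ x satisfy f·x < φ(n) ≤ 2f·x. -/
open Filter

lemma castsub_ge (a b : ℕ) : (a:ℝ) - b ≤ ((a - b : ℕ) : ℝ) := by
  rcases le_total b a with h | h
  · rw [Nat.cast_sub h]
  · have h1 : a - b = 0 := Nat.sub_eq_zero_of_le h
    have h2 : (a:ℝ) ≤ b := Nat.cast_le.mpr h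
    rw [h1]; simp; linarith

lemma natdiv_ge (a b : ℕ) (hb : 0 < b) : (a:ℝ)/b - 1 ≤ ((a / b : ℕ) : ℝ) := by
  have h1 : a < b * (a / b) + b := by
    have h2 := Nat.div_add_mod a b
    have h3 := Nat.mod_lt a hb
    omega
  have hb' : (0:ℝ) < b := by exact_mod_cast hb
  have h4 : (a:ℝ) < b * ((a/b : ℕ):ℝ) + b := by exact_mod_cast h1
  rw [sub_le_iff_le_add, div_le_iff₀ hb']
  nlinarith

lemma one_sub_sum_le_prod (s : Finset ℕ) (g : ℕ → ℝ) (h0 : ∀ i ∈ s, 0 ≤ g i)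
    (h1 : ∀ i ∈ s, g i ≤ 1) : 1 - ∑ i ∈ s, g i ≤ ∏ i ∈ s, (1 - g i) := by
  classical
  induction s using Finset.induction_on with
  | empty => simp
  | @insert a s ha ih =>
    rw [Finset.sum_insert ha, Finset.prod_insert ha]
    have hs0 : 0 ≤ ∑ i ∈ s, g i :=
      Finset.sum_nonneg (fun i hi => h0 i (Finset.mem_insert_of_mem hi))
    have ihh := ih (fun i hi => h0 i (Finset.mem_insert_of_mem hi))
      (fun i hi => h1 i (Finset.mem_insert_of_mem hi))
    have hga0 := h0 a (Finset.mem_insert_self a s)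
    have hga1 := h1 a (Finset.mem_insert_self a s)
    nlinarith [mul_le_mul_of_nonneg_left ihh (by linarith : (0:ℝ) ≤ 1 - g a),
      mul_nonneg hga0 hs0]

lemma totient_lb (n : ℕ) : (1 - ∑ p ∈ n.primeFactors, (p:ℝ)⁻¹) * n ≤ (n.totient:ℝ) := by
  have h := Nat.totient_eq_mul_prod_factors n
  have h' : (n.totient : ℝ) = n * ∏ p ∈ n.primeFactors, (1 - (p:ℝ)⁻¹) := by
    have h2 := congrArg (fun q : ℚ => (q:ℝ)) h
    push_cast at h2
    exact h2
  rw [h', mul_comm ((n:ℝ)) _]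
  refine mul_le_mul_of_nonneg_right ?_ (Nat.cast_nonneg n)
  refine one_sub_sum_le_prod _ _ (fun i _ => by positivity) (fun i hi => ?_)
  have h2 : 1 ≤ i := (Nat.prime_of_mem_primeFactors hi).one_lt.le
  have h3 : (1:ℝ) ≤ i := by exact_mod_cast h2
  exact inv_le_one_of_one_le₀ h3

lemma telescope' (M : ℕ) (hM : 1 ≤ M) :
    ∑ j ∈ Finset.Icc 2 M, ((j:ℝ)⁻¹ - ((j:ℝ)+1)⁻¹) = (2:ℝ)⁻¹ - ((M:ℝ)+1)⁻¹ := by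
  induction M with
  | zero => omega
  | succ m ih =>
    by_cases hm : m = 0
    · subst hm; norm_num
    · rw [Finset.sum_Icc_succ_top (by omega : 2 ≤ m + 1), ih (by omega)]
      push_cast; ring

lemma sum_sq_primes_le (P : Finset ℕ) (hP : ∀ p ∈ P, 5 ≤ p ∧ ¬ 2 ∣ p) :
    ∑ p ∈ P, ((p:ℝ)*p)⁻¹ ≤ 8⁻¹ := by
  classical
  rcases P.eq_empty_or_nonempty with rfl | hne
  · simp
  have key : ∀ p ∈ P, ((p:ℝ)*p)⁻¹ ≤ 4⁻¹ * (((p/2 : ℕ):ℝ)⁻¹ - (((p/2 : ℕ):ℝ)+1)⁻¹) := by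
    intro p hp
    obtain ⟨h5, hodd⟩ := hP p hp
    have hj : p = 2*(p/2)+1 := by omega
    have hj2 : 2 ≤ p/2 := by omega
    have hjR : (2:ℝ) ≤ ((p/2 : ℕ):ℝ) := by exact_mod_cast hj2
    set jR : ℝ := ((p/2 : ℕ):ℝ) with hjRdef
    have hjpos : (0:ℝ) < jR := by linarith
    have hpR : (p:ℝ) = 2*jR+1 := by rw [hjRdef]; exact_mod_cast congrArg (Nat.cast (R := ℝ)) hj
    rw [hpR]
    have heq : (4:ℝ)⁻¹ * (jR⁻¹ - (jR+1)⁻¹) = ((2*jR)*(2*jR+2))⁻¹ := by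
      field_simp; ring
    rw [heq]
    apply inv_anti₀ (by positivity)
    nlinarith
  have step1 : ∑ p ∈ P, ((p:ℝ)*p)⁻¹ ≤
      4⁻¹ * ∑ p ∈ P, (((p/2 : ℕ):ℝ)⁻¹ - (((p/2 : ℕ):ℝ)+1)⁻¹) := by
    rw [Finset.mul_sum]
    exact Finset.sum_le_sum key
  have hinj : Set.InjOn (fun p => p / 2) P := by
    intro a ha b hb hab
    have ha' := hP a ha; have hb' := hP b hb
    simp only at hab
    omega
  have step2 := Finset.sum_image (s := P) (g := fun p => p / 2)
    (f := fun j : ℕ => ((j:ℝ)⁻¹ - ((j:ℝ)+1)⁻¹)) (fun a ha b hb h => hinj ha hb h)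
  set S := P.image (fun p => p / 2) with hS
  have hSne : S.Nonempty := hne.image _
  set M := S.max' hSne with hM
  have hsub : S ⊆ Finset.Icc 2 M := by
    intro j hj
    rw [Finset.mem_Icc]
    constructor
    · rw [hS, Finset.mem_image] at hj
      obtain ⟨p, hp, rfl⟩ := hj
      have := hP p hp
      omega
    · exact S.le_max' j hj
  have hM1 : 1 ≤ M := by
    obtain ⟨j, hj⟩ := hSne
    have := hsub hj
    rw [Finset.mem_Icc] at this
    omega
  have step3 : ∑ j ∈ S, ((j:ℝ)⁻¹ - ((j:ℝ)+1)⁻¹) ≤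
      ∑ j ∈ Finset.Icc 2 M, ((j:ℝ)⁻¹ - ((j:ℝ)+1)⁻¹) := by
    refine Finset.sum_le_sum_of_subset_of_nonneg hsub (fun j hj _ => ?_)
    rw [Finset.mem_Icc] at hj
    have h0 : (0:ℝ) < j := by exact_mod_cast (by omega : 0 < j)
    have h1 : ((j:ℝ)+1)⁻¹ ≤ ((j:ℝ))⁻¹ := by
      apply inv_anti₀ h0; linarith
    linarith
  have step4 := telescope' M hM1
  have hMc : (0:ℝ) ≤ ((M:ℝ)+1)⁻¹ := by positivity
  calc ∑ p ∈ P, ((p:ℝ)*p)⁻¹ ≤ 4⁻¹ * ∑ p ∈ P, (((p/2 : ℕ):ℝ)⁻¹ - (((p/2 : ℕ):ℝ)+1)⁻¹) := step1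
    _ = 4⁻¹ * ∑ j ∈ S, ((j:ℝ)⁻¹ - ((j:ℝ)+1)⁻¹) := by rw [hS, step2]
    _ ≤ 4⁻¹ * ((2:ℝ)⁻¹ - ((M:ℝ)+1)⁻¹) := by
        rw [← step4]; linarith [step3]
    _ ≤ 8⁻¹ := by norm_num; linarith

lemma sum_inv_le (P : Finset ℕ) (B : ℕ) (hB : 1 ≤ B) (hP : P ⊆ Finset.Icc 1 B) :
    ∑ p ∈ P, (p:ℝ)⁻¹ ≤ 1 + 2 * Real.sqrt B := by
  have h1 : ∑ p ∈ P, (p:ℝ)⁻¹ ≤ ∑ k ∈ Finset.Icc 1 B, (k:ℝ)⁻¹ :=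
    Finset.sum_le_sum_of_subset_of_nonneg hP (fun k _ _ => by positivity)
  have h2 : ∑ k ∈ Finset.Icc 1 B, (k:ℝ)⁻¹ = ((harmonic B : ℚ) : ℝ) := by
    rw [harmonic_eq_sum_Icc]; push_cast; rfl
  have h3 := harmonic_le_one_add_log B
  have hBpos : (0:ℝ) < B := by exact_mod_cast hB
  have h5 := Real.log_le_sub_one_of_pos (Real.sqrt_pos.mpr hBpos)
  have h6 := Real.log_sqrt hBpos.le
  linarith

lemma card_dvd_Ioc (p A B : ℕ) (hAB : A ≤ B) :
    ((Finset.Ioc A B).filter (fun n => p ∣ n)).card = B / p - A / p := by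
  have hsplit : Finset.Ioc 0 A ∪ Finset.Ioc A B = Finset.Ioc 0 B :=
    Finset.Ioc_union_Ioc_eq_Ioc (Nat.zero_le A) hAB
  have hdisj : Disjoint ((Finset.Ioc 0 A).filter (fun n => p ∣ n))
      ((Finset.Ioc A B).filter (fun n => p ∣ n)) := by
    rw [Finset.disjoint_left]
    intro a ha hb
    simp only [Finset.mem_filter, Finset.mem_Ioc] at ha hb
    omega
  have hB := Nat.Ioc_filter_dvd_card_eq_div B p
  have hA := Nat.Ioc_filter_dvd_card_eq_div A p
  have hsum : ((Finset.Ioc 0 B).filter (fun n => p ∣ n)).card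
      = ((Finset.Ioc 0 A).filter (fun n => p ∣ n)).card
        + ((Finset.Ioc A B).filter (fun n => p ∣ n)).card := by
    rw [← hsplit, Finset.filter_union, Finset.card_union_of_disjoint hdisj]
  omega

set_option maxHeartbeats 2000000 in
theorem stmt_16 (f : ℝ) (hf0 : 0 < f) (hf : f ≤ 1 / 2) :
    ∃ c : ℝ, 0 < c ∧ ∀ᶠ x : ℝ in atTop,
      c * x ≤ (((Finset.Icc 1 ⌊x⌋₊).filter
        (fun n => f * x < (Nat.totient n : ℝ) ∧ (Nat.totient n : ℝ) ≤ 2 * f * x)).card : ℝ) := by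
  refine ⟨f / 2000, by positivity, ?_⟩
  filter_upwards [eventually_ge_atTop ((10:ℝ)^10 / f)] with x hx
  have hy10 : (10:ℝ)^10 ≤ f * x := by
    rw [div_le_iff₀ hf0] at hx; linarith
  set y := f * x with hy
  have hy0 : 0 < y := by nlinarith
  have hx0 : 0 < x := by nlinarith
  have hyx : 2 * y ≤ x := by nlinarith
  set A := ⌊(100/51) * y⌋₊ with hA
  set B := ⌊2 * y⌋₊ with hB
  have hyA : (100/51) * y < (A:ℝ) + 1 := by
    have h := Nat.lt_floor_add_one ((100/51) * y)
    rw [← hA] at h; exact h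
  have hA_le : (A:ℝ) ≤ (100/51) * y := Nat.floor_le (by positivity)
  have hB_le : (B:ℝ) ≤ 2 * y := Nat.floor_le (by positivity)
  have hB_ge : 2 * y - 1 < (B:ℝ) := by
    have h := Nat.lt_floor_add_one (2 * y)
    rw [← hB] at h; linarith
  have hB1 : 1 ≤ B := Nat.le_floor (by push_cast; linarith)
  have hAB : A ≤ B := Nat.floor_mono (by linarith)
  have hABR : (A:ℝ) ≤ B := Nat.cast_le.mpr hAB
  set Q : ℕ → ℝ := fun n => ∑ p ∈ n.primeFactors, (p:ℝ)⁻¹ with hQ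
  set T := (Finset.Ioc A B).filter (fun n => ¬ 2 ∣ n) with hT
  set G := T.filter (fun n => Q n ≤ 49/100) with hG
  set Bad := T.filter (fun n => ¬ Q n ≤ 49/100) with hBadDef
  -- (I) G is included in the target set
  have hGsub : G ⊆ (Finset.Icc 1 ⌊x⌋₊).filter
      (fun n => f * x < (Nat.totient n : ℝ) ∧ (Nat.totient n : ℝ) ≤ 2 * f * x) := by
    intro n hn
    rw [hG, Finset.mem_filter, hT, Finset.mem_filter, Finset.mem_Ioc] at hn
    obtain ⟨⟨⟨hnA, hnB⟩, _hodd⟩, hQn⟩ := hn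
    have hn1 : 1 ≤ n := by omega
    have hnA' : (A:ℝ) + 1 ≤ n := by exact_mod_cast hnA
    have hnR_gt : (100/51) * y < (n:ℝ) := by linarith
    have hnB' : (n:ℝ) ≤ B := Nat.cast_le.mpr hnB
    have htot_le : (Nat.totient n : ℝ) ≤ n := by exact_mod_cast Nat.totient_le n
    have hQn' : ∑ p ∈ n.primeFactors, (p:ℝ)⁻¹ ≤ 49/100 := hQn
    have htot_ge : (51/100) * (n:ℝ) ≤ (Nat.totient n : ℝ) := by
      have h2 : (51/100:ℝ) ≤ 1 - ∑ p ∈ n.primeFactors, (p:ℝ)⁻¹ := by linarith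
      calc (51/100) * (n:ℝ) ≤ (1 - ∑ p ∈ n.primeFactors, (p:ℝ)⁻¹) * n :=
            mul_le_mul_of_nonneg_right h2 (Nat.cast_nonneg n)
        _ ≤ (Nat.totient n : ℝ) := totient_lb n
    refine Finset.mem_filter.mpr ⟨Finset.mem_Icc.mpr ⟨hn1, le_trans hnB (Nat.floor_mono hyx)⟩,
      ?_, ?_⟩
    · rw [← hy]; nlinarith
    · have h3 : (2:ℝ) * y = 2 * f * x := by rw [hy]; ring
      linarith
  -- (II) lower bound for the count of odd numbers in (A, B]
  set J := (A+1)/2 with hJ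
  set K := (B-1)/2 + 1 with hK
  have himsub : (Finset.Ico J K).image (fun j => 2*j+1) ⊆ T := by
    intro m hm
    simp only [Finset.mem_image, Finset.mem_Ico] at hm
    obtain ⟨j, ⟨hj1, hj2⟩, rfl⟩ := hm
    rw [hT, Finset.mem_filter, Finset.mem_Ioc]
    omega
  have hTcard : ((B:ℝ) - A)/2 - 1 ≤ (T.card : ℝ) := by
    have hinj2 : Function.Injective (fun j : ℕ => 2*j+1) := by
      intro a b h
      simp only [] at h
      omega
    have h1 : (Finset.Ico J K).card ≤ T.card := by
      rw [← Finset.card_image_of_injective (Finset.Ico J K) hinj2]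
      exact Finset.card_le_card himsub
    have h2 : (Finset.Ico J K).card = K - J := Nat.card_Ico J K
    have h3 : ((K - J : ℕ):ℝ) ≤ (T.card : ℝ) := by
      rw [← h2]; exact_mod_cast h1
    have h4 := castsub_ge K J
    have hJle : (J:ℝ) ≤ ((A:ℝ)+1)/2 := by
      have h5 : ((J:ℕ):ℝ) ≤ ((A+1 : ℕ):ℝ)/2 := by
        rw [hJ]
        exact_mod_cast Nat.cast_div_le (α := ℝ)
      push_cast at h5
      linarith
    have hKge : ((B:ℝ)-1)/2 ≤ (K:ℝ) := by
      have h5 := natdiv_ge (B-1) 2 (by norm_num)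
      have h6 : ((B-1:ℕ):ℝ) = (B:ℝ) - 1 := by
        rw [Nat.cast_sub hB1]; norm_num
      rw [h6] at h5
      have h7 : (K:ℝ) = ((B-1)/2 : ℕ) + 1 := by rw [hK]; push_cast; ring
      linarith
    linarith
  -- (III) Markov bound for the bad set
  have hQnonneg : ∀ n, 0 ≤ Q n := fun n => Finset.sum_nonneg (fun p _ => by positivity)
  have hBadcard : (Bad.card : ℝ) * (49/100) ≤ ∑ n ∈ T, Q n := by
    have h1 : ∀ n ∈ Bad, (49/100:ℝ) ≤ Q n := by
      intro n hn
      rw [hBadDef, Finset.mem_filter] at hn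
      linarith [not_le.mp hn.2]
    have h2 := Finset.card_nsmul_le_sum Bad Q (49/100) h1
    rw [nsmul_eq_mul] at h2
    have h3 : ∑ n ∈ Bad, Q n ≤ ∑ n ∈ T, Q n :=
      Finset.sum_le_sum_of_subset_of_nonneg (Finset.filter_subset _ _) (fun n _ _ => hQnonneg n)
    linarith
  -- (IV) bounding the sum of Q over T
  set P := (Finset.Ioc 2 B).filter Nat.Prime with hP
  have hfac : ∀ n ∈ T, n.primeFactors = P.filter (fun p => p ∣ n) := by
    intro n hn
    rw [hT, Finset.mem_filter, Finset.mem_Ioc] at hn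
    obtain ⟨⟨hnA, hnB⟩, hodd⟩ := hn
    ext p
    simp only [Nat.mem_primeFactors, hP, Finset.mem_filter, Finset.mem_Ioc]
    constructor
    · rintro ⟨hp, hpn, hn0⟩
      have hne2 : p ≠ 2 := by rintro rfl; exact hodd hpn
      have h2le := hp.two_le
      have hple : p ≤ n := Nat.le_of_dvd (by omega) hpn
      exact ⟨⟨⟨by omega, by omega⟩, hp⟩, hpn⟩
    · rintro ⟨⟨⟨h2, hpB⟩, hp⟩, hpn⟩
      exact ⟨hp, hpn, by omega⟩
  have hswap : ∑ n ∈ T, Q n = ∑ p ∈ P, ((T.filter (fun n => p ∣ n)).card : ℝ) * (p:ℝ)⁻¹ := by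
    have e1 : ∀ n ∈ T, Q n = ∑ p ∈ P, (if p ∣ n then (p:ℝ)⁻¹ else 0) := by
      intro n hn
      simp only [hQ]
      rw [hfac n hn, Finset.sum_filter]
    rw [Finset.sum_congr rfl e1, Finset.sum_comm]
    refine Finset.sum_congr rfl (fun p _ => ?_)
    rw [← Finset.sum_filter, Finset.sum_const, nsmul_eq_mul]
  have hmult : ∀ p ∈ P, ((T.filter (fun n => p ∣ n)).card : ℝ) ≤ ((B:ℝ)-A) * (p:ℝ)⁻¹ + 1 := by
    intro p hp
    rw [hP, Finset.mem_filter, Finset.mem_Ioc] at hp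
    obtain ⟨⟨hp2, hpB⟩, hprime⟩ := hp
    have hppos : 0 < p := by omega
    have hppos' : (0:ℝ) < p := by exact_mod_cast hppos
    have hsub2 : T.filter (fun n => p ∣ n) ⊆ (Finset.Ioc A B).filter (fun n => p ∣ n) :=
      Finset.filter_subset_filter _ (Finset.filter_subset _ _)
    have h1 : (T.filter (fun n => p ∣ n)).card ≤ B/p - A/p := by
      rw [← card_dvd_Ioc p A B hAB]
      exact Finset.card_le_card hsub2
    have hdivle : A/p ≤ B/p := Nat.div_le_div_right hAB
    have h2 : ((B/p - A/p : ℕ):ℝ) = ((B/p:ℕ):ℝ) - ((A/p:ℕ):ℝ) := by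
      rw [Nat.cast_sub hdivle]
    have h3 : ((B/p:ℕ):ℝ) ≤ (B:ℝ)/p := Nat.cast_div_le
    have h4 := natdiv_ge A p hppos
    have h5 : ((T.filter (fun n => p ∣ n)).card : ℝ) ≤ ((B/p - A/p : ℕ):ℝ) := by
      exact_mod_cast h1
    rw [h2] at h5
    have h6 : (B:ℝ)/p - ((A:ℝ)/p - 1) = ((B:ℝ)-A) * (p:ℝ)⁻¹ + 1 := by
      field_simp
      ring
    linarith
  have hsum_sq : ∑ p ∈ P, (p:ℝ)⁻¹ * (p:ℝ)⁻¹ ≤ 1/9 + 1/8 := by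
    have herase : ∑ p ∈ P.erase 3, (p:ℝ)⁻¹ * (p:ℝ)⁻¹ ≤ 8⁻¹ := by
      have hcond : ∀ p ∈ P.erase 3, 5 ≤ p ∧ ¬ 2 ∣ p := by
        intro p hp
        rw [Finset.mem_erase, hP, Finset.mem_filter, Finset.mem_Ioc] at hp
        obtain ⟨hne3, ⟨h2p, hpB⟩, hprime⟩ := hp
        have h4 : p ≠ 4 := by rintro rfl; norm_num at hprime
        constructor
        · omega
        · intro h2
          rcases (Nat.Prime.eq_one_or_self_of_dvd hprime 2 h2) with h|h <;> omega
      have h := sum_sq_primes_le (P.erase 3) hcond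
      calc ∑ p ∈ P.erase 3, (p:ℝ)⁻¹ * (p:ℝ)⁻¹
          = ∑ p ∈ P.erase 3, ((p:ℝ)*p)⁻¹ := by
            refine Finset.sum_congr rfl (fun p _ => ?_); rw [mul_inv]
        _ ≤ 8⁻¹ := h
    by_cases h3 : 3 ∈ P
    · have heq := Finset.sum_erase_add P (fun p => (p:ℝ)⁻¹ * (p:ℝ)⁻¹) h3
      have h9 : ((3:ℕ):ℝ)⁻¹ * ((3:ℕ):ℝ)⁻¹ = 1/9 := by norm_num
      rw [← heq]
      rw [h9]
      linarith
    · rw [Finset.erase_eq_of_notMem h3] at herase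
      linarith
  have hPIcc : P ⊆ Finset.Icc 1 B := by
    intro p hp
    rw [hP, Finset.mem_filter, Finset.mem_Ioc] at hp
    rw [Finset.mem_Icc]
    omega
  have hsum_inv : ∑ p ∈ P, (p:ℝ)⁻¹ ≤ 1 + 2 * Real.sqrt B := sum_inv_le P B hB1 hPIcc
  have hSig : ∑ n ∈ T, Q n ≤ ((B:ℝ)-A) * (1/9 + 1/8) + (1 + 2 * Real.sqrt B) := by
    rw [hswap]
    have step : ∀ p ∈ P, ((T.filter (fun n => p ∣ n)).card : ℝ) * (p:ℝ)⁻¹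
        ≤ ((B:ℝ)-A) * ((p:ℝ)⁻¹ * (p:ℝ)⁻¹) + (p:ℝ)⁻¹ := by
      intro p hp
      have h1 := hmult p hp
      have hpinv : (0:ℝ) ≤ (p:ℝ)⁻¹ := by positivity
      nlinarith
    calc ∑ p ∈ P, ((T.filter (fun n => p ∣ n)).card : ℝ) * (p:ℝ)⁻¹
        ≤ ∑ p ∈ P, (((B:ℝ)-A) * ((p:ℝ)⁻¹ * (p:ℝ)⁻¹) + (p:ℝ)⁻¹) := Finset.sum_le_sum step
      _ = ((B:ℝ)-A) * (∑ p ∈ P, (p:ℝ)⁻¹*(p:ℝ)⁻¹) + ∑ p ∈ P, (p:ℝ)⁻¹ := by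
          rw [Finset.sum_add_distrib, Finset.mul_sum]
      _ ≤ ((B:ℝ)-A) * (1/9 + 1/8) + (1 + 2 * Real.sqrt B) := by
          have hBA0 : (0:ℝ) ≤ (B:ℝ) - A := by linarith
          have h10 := mul_le_mul_of_nonneg_left hsum_sq hBA0
          linarith
  -- (V) final arithmetic
  have hGBT : (G.card:ℝ) + Bad.card = T.card := by
    have h := Finset.card_filter_add_card_filter_not
      (s := T) (p := fun n => Q n ≤ 49/100)
    rw [← hG, ← hBadDef] at h
    exact_mod_cast h
  have htarget : (G.card:ℝ) ≤ (((Finset.Icc 1 ⌊x⌋₊).filter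
      (fun n => f * x < (Nat.totient n : ℝ) ∧ (Nat.totient n : ℝ) ≤ 2 * f * x)).card : ℝ) := by
    exact_mod_cast Finset.card_le_card hGsub
  have hsB : Real.sqrt B ≤ (2/141421) * y := by
    have h1 : Real.sqrt B ≤ Real.sqrt (2*y) := Real.sqrt_le_sqrt hB_le
    have h2 : (141421:ℝ) ≤ Real.sqrt (2*y) := by
      rw [show (141421:ℝ) = Real.sqrt (141421^2) by rw [Real.sqrt_sq (by norm_num)]]
      apply Real.sqrt_le_sqrt
      nlinarith
    have h3 : Real.sqrt (2*y) * Real.sqrt (2*y) = 2*y := Real.mul_self_sqrt (by linarith)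
    nlinarith
  have hsqrt0 : 0 ≤ Real.sqrt B := Real.sqrt_nonneg _
  have hgoal : f / 2000 * x = y / 2000 := by rw [hy]; ring
  rw [hgoal]
  have hBadle : (Bad.card:ℝ) * (49/100) ≤ ((B:ℝ)-A) * (1/9 + 1/8) + (1 + 2 * Real.sqrt B) :=
    le_trans hBadcard hSig
  linarith [htarget, hGBT, hTcard, hBadle, hsB, hy10, hsqrt0, hA_le, hB_ge]
end
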